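/- Let c ∈ ℕ and let G be a graph containing a (c,c)-constellation as an induced subgraph. Then G contains an induced minor isomorphic to K_{c,c}, and hence the constellation has treewidth at least c. -/

import Mathlib

open SimpleGraph

universe u v

/-- No edge of `G` joins `X` and `Y`. -/
def NoEdges {V : Type u} (G : SimpleGraph V) (X Y : Set V) : Prop :=
  ∀ ⦃x⦄, x ∈ X → ∀ ⦃y⦄, y ∈ Y → ¬ G.Adj x y

/-- `X` and `Y` are anticomplete: disjoint with no edges between them. -/
def Anticomplete {V : Type u} (G : SimpleGraph V) (X Y : Set V) : Prop :=
  Disjoint X Y ∧ NoEdges G X Y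

/-- A stable (independent) set. -/
def IsStableSet {V : Type u} (G : SimpleGraph V) (S : Set V) : Prop :=
  S.Pairwise fun x y => ¬ G.Adj x y

/-- Some edge of `G` joins `X` and `Y`. -/
def Touches {V : Type u} (G : SimpleGraph V) (X Y : Set V) : Prop :=
  ∃ x ∈ X, ∃ y ∈ Y, G.Adj x y

/-- `P` induces a (nonempty) path in `G`. -/
def IsInducedPath {V : Type u} (G : SimpleGraph V) (P : Set V) : Prop :=
  ∃ n : ℕ, 0 < n ∧ Nonempty (G.induce P ≃g pathGraph n)

/-- A `μ`-model in `G`: pairwise disjoint connected induced subgraphs, pairwise joined. -/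
def IsCompleteModel {V : Type u} (G : SimpleGraph V) {μ : ℕ} (C : Fin μ → Set V) : Prop :=
  (∀ i, (G.induce (C i)).Connected) ∧
  (Pairwise fun i j => Disjoint (C i) (C j)) ∧
  Pairwise fun i j => Touches G (C i) (C j)

/-- All branch sets are induced paths. -/
def IsLinearFamily {V : Type u} (G : SimpleGraph V) {μ : ℕ} (C : Fin μ → Set V) : Prop :=
  ∀ i, IsInducedPath G (C i)

/-- A `(ρ,σ)`-model in `G`. -/
def IsBipModel {V : Type u} (G : SimpleGraph V) {ρ σ : ℕ}
    (A : Fin ρ → Set V) (B : Fin σ → Set V) : Prop :=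
  (∀ i, (G.induce (A i)).Connected) ∧ (∀ j, (G.induce (B j)).Connected) ∧
  (Pairwise fun i j => Disjoint (A i) (A j)) ∧
  (Pairwise fun i j => Disjoint (B i) (B j)) ∧
  (∀ i j, Disjoint (A i) (B j)) ∧
  ∀ i j, Touches G (A i) (B j)

/-- The family `A` is pairwise anticomplete. -/
def FamilyInduced {V : Type u} (G : SimpleGraph V) {ρ : ℕ} (A : Fin ρ → Set V) : Prop :=
  Pairwise fun i j => NoEdges G (A i) (A j)

/-- `H` is a minor of `G`, via a minor model. -/
def IsMinorOf {W : Type v} {V : Type u} (H : SimpleGraph W) (G : SimpleGraph V) : Prop :=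
  ∃ φ : W → Set V,
    (∀ w, (G.induce (φ w)).Connected) ∧
    (Pairwise fun w w' => Disjoint (φ w) (φ w')) ∧
    ∀ ⦃w w'⦄, H.Adj w w' → Touches G (φ w) (φ w')

/-- `H` is an induced minor of `G`. -/
def IsInducedMinorOf {W : Type v} {V : Type u} (H : SimpleGraph W) (G : SimpleGraph V) : Prop :=
  ∃ φ : W → Set V,
    (∀ w, (G.induce (φ w)).Connected) ∧
    (Pairwise fun w w' => Disjoint (φ w) (φ w')) ∧
    (∀ ⦃w w'⦄, H.Adj w w' → Touches G (φ w) (φ w')) ∧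
    ∀ ⦃w w'⦄, w ≠ w' → ¬ H.Adj w w' → NoEdges G (φ w) (φ w')

/-- `G` has a tree decomposition of width at most `k`. -/
def TreewidthAtMost {V : Type u} (G : SimpleGraph V) (k : ℕ) : Prop :=
  ∃ (ι : Type u) (T : SimpleGraph ι) (bag : ι → Set V),
    T.IsTree ∧
    (∀ x : V, ∃ i, x ∈ bag i) ∧
    (∀ ⦃x y⦄, G.Adj x y → ∃ i, x ∈ bag i ∧ y ∈ bag i) ∧
    (∀ x : V, (T.induce {i | x ∈ bag i}).Connected) ∧
    ∀ i, (bag i).Finite ∧ (bag i).ncard ≤ k + 1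

/-- A subdivision model: `G` is obtained from `H` by replacing edges with
internally disjoint paths. -/
def IsSubdivisionModel {W : Type v} {V : Type u} (H : SimpleGraph W) (G : SimpleGraph V)
    (f : W → V) (P : ∀ ⦃a b : W⦄, H.Adj a b → G.Walk (f a) (f b)) : Prop :=
  Function.Injective f ∧
  (∀ ⦃a b⦄ (h : H.Adj a b), (P h).IsPath) ∧
  (∀ ⦃a b⦄ (h : H.Adj a b), P h.symm = (P h).reverse) ∧
  (∀ ⦃a b⦄ (h : H.Adj a b) (x : V), x ∈ (P h).support → x ∈ Set.range f →
      x = f a ∨ x = f b) ∧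
  (∀ ⦃a b⦄ (h : H.Adj a b) ⦃a' b'⦄ (h' : H.Adj a' b'), s(a, b) ≠ s(a', b') →
      ∀ x, x ∈ (P h).support → x ∈ (P h').support → x ∈ Set.range f) ∧
  (∀ x : V, x ∈ Set.range f ∨ ∃ a b, ∃ h : H.Adj a b, x ∈ (P h).support) ∧
  ∀ e ∈ G.edgeSet, ∃ a b, ∃ h : H.Adj a b, e ∈ (P h).edges

/-- `G` is (isomorphic to) a subdivision of `H`. -/
def IsSubdivisionOf {W : Type v} {V : Type u} (H : SimpleGraph W) (G : SimpleGraph V) : Prop :=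
  ∃ f P, IsSubdivisionModel H G f P

/-- `G` is a proper subdivision of `H`: every edge is subdivided at least once. -/
def IsProperSubdivisionOf {W : Type v} {V : Type u} (H : SimpleGraph W) (G : SimpleGraph V) : Prop :=
  ∃ f P, IsSubdivisionModel H G f P ∧ ∀ ⦃a b⦄ (h : H.Adj a b), 2 ≤ (P h).length

/-- The `r`-by-`r` wall (hexagonal grid / brick wall). -/
def wallGraph (r : ℕ) : SimpleGraph (Fin r × Fin (2 * r)) :=
  SimpleGraph.fromRel fun p q =>
    (p.1 = q.1 ∧ p.2.val + 1 = q.2.val) ∨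
    (p.2 = q.2 ∧ p.1.val + 1 = q.1.val ∧ (p.1.val + p.2.val) % 2 = 0)

/-- `R` is an induced path in `G` (as a walk). -/
def IsPathIn {V : Type u} (G : SimpleGraph V) {x y : V} (R : G.Walk x y) : Prop :=
  R.IsPath ∧ IsInducedPath G {z | z ∈ R.support}

/-- The interior of a walk from `x` to `y`. -/
def interiorSet {V : Type u} (G : SimpleGraph V) {x y : V} (R : G.Walk x y) : Set V :=
  {z | z ∈ R.support ∧ z ≠ x ∧ z ≠ y}

/-- An `s`-constellation `(S, L)` in `G` (with `V(G) = S ∪ L`). -/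
def IsConstellation {V : Type u} (G : SimpleGraph V) (S L : Set V) (s : ℕ) : Prop :=
  S ∪ L = Set.univ ∧ Disjoint S L ∧ IsInducedPath G L ∧ IsStableSet G S ∧
  S.Finite ∧ S.ncard = s ∧ ∀ x ∈ S, ∃ z ∈ L, G.Adj x z

/-- Ample: no two vertices of `S` have a common neighbor in `L`. -/
def IsAmple {V : Type u} (G : SimpleGraph V) (S L : Set V) : Prop :=
  ∀ ⦃x⦄, x ∈ S → ∀ ⦃y⦄, y ∈ S → x ≠ y → ∀ ⦃z⦄, z ∈ L → ¬ (G.Adj x z ∧ G.Adj y z)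

/-- Interrupted: an enumeration of `S` such that later vertices meet the interior of
every route between earlier vertices. -/
def IsInterrupted {V : Type u} (G : SimpleGraph V) (S L : Set V) (s : ℕ) : Prop :=
  ∃ x : Fin s → V, Function.Injective x ∧ Set.range x = S ∧
    ∀ ⦃i j k : Fin s⦄, i < j → j < k →
      ∀ (R : G.Walk (x i) (x j)), IsPathIn G R → interiorSet G R ⊆ L →
        ∃ z ∈ interiorSet G R, G.Adj (x k) z

/-- An `(s,l)`-constellation in `G` with stable set `S` (and `V(G) = S ∪ paths`). -/
def IsSLConstellation {V : Type u} (G : SimpleGraph V) (S : Set V) (s l : ℕ) : Prop :=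
  IsStableSet G S ∧ S.Finite ∧ S.ncard = s ∧
  Nat.card (G.induce Sᶜ).ConnectedComponent = l ∧
  (∀ C : (G.induce Sᶜ).ConnectedComponent, IsInducedPath G (Subtype.val '' C.supp)) ∧
  ∀ x ∈ S, ∀ C : (G.induce Sᶜ).ConnectedComponent, ∃ z ∈ Subtype.val '' C.supp, G.Adj x z

/-- A route of the constellation: an induced path with distinct ends in `S` and
interior outside `S`. -/
def IsRoute {V : Type u} (G : SimpleGraph V) (S : Set V) {x y : V} (R : G.Walk x y) : Prop :=
  x ∈ S ∧ y ∈ S ∧ x ≠ y ∧ IsPathIn G R ∧ interiorSet G R ⊆ Sᶜ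

/-- Ample `(s,l)`-constellation: no route of length at most `2`. -/
def IsSLAmple {V : Type u} (G : SimpleGraph V) (S : Set V) : Prop :=
  ∀ ⦃x y : V⦄ (R : G.Walk x y), IsRoute G S R → 2 < R.length

/-- `q`-zigzagged. -/
def IsZigzagged {V : Type u} (G : SimpleGraph V) (S : Set V) (q : ℕ) : Prop :=
  ∃ e : V → ℕ, Set.InjOn e S ∧
    ∀ ⦃x⦄, x ∈ S → ∀ ⦃y⦄, y ∈ S → e x < e y →
      ∀ (R : G.Walk x y), IsRoute G S R →
        ({z | z ∈ S ∧ e x < e z ∧ e z < e y ∧ ¬ ∃ w ∈ R.support, G.Adj z w}).ncard < q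

/-- A strong `(k,l)`-block `(B, Q)` in `G`. -/
def IsStrongBlock {V : Type u} (G : SimpleGraph V) (k l : ℕ) (B : Set V)
    (Q : (x : V) → (y : V) → Set (G.Walk x y)) : Prop :=
  B.Finite ∧ k ≤ B.ncard ∧
  (∀ x ∈ B, ∀ y ∈ B, x ≠ y →
    (∃ s : Finset (G.Walk x y), ↑s ⊆ Q x y ∧ l ≤ s.card) ∧
    (∀ W ∈ Q x y, IsPathIn G W) ∧
    (∀ W ∈ Q x y, ∀ W' ∈ Q x y, W ≠ W' →
      ∀ z, z ∈ SimpleGraph.Walk.support W → z ∈ SimpleGraph.Walk.support W' →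
        z = x ∨ z = y)) ∧
  ∀ x ∈ B, ∀ y ∈ B, x ≠ y → ∀ x' ∈ B, ∀ y' ∈ B, x' ≠ y' → s(x, y) ≠ s(x', y') →
    ∀ W ∈ Q x y, ∀ W' ∈ Q x' y',
      ∀ z, z ∈ SimpleGraph.Walk.support W → z ∈ SimpleGraph.Walk.support W' →
        z ∈ ({x, y} ∩ {x', y'} : Set V)

/-- A `(α,1)`-model with path side `B` is `A`-aligned. -/
def AAlignedSingle {V : Type u} (G : SimpleGraph V) {α : ℕ}
    (A : Fin α → Set V) (B : Set V) : Prop :=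
  ∃ (n : ℕ) (e : G.induce B ≃g pathGraph n) (l r : Fin α → ℕ),
    (∀ i, l i ≤ r i) ∧ (∀ i j, i < j → r i < l j) ∧
    ∀ i (x : B), (∃ a ∈ A i, G.Adj ↑x a) → l i ≤ (e x).val ∧ (e x).val ≤ r i

/-!
The vertices of `S`, as singletons, and the `c` paths form an induced `K_{c,c}` model: `S` is
stable, distinct components of `G - S` are anticomplete, and every vertex of `S` sees every path.
Contracting all but one edge of a perfect matching of `K_{c,c}` yields a `K_{c+1}` model. In a
tree decomposition the nodes whose bags meet a connected set form a subtree, and pairwise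
intersecting subtrees have a common node, so some bag meets all `c + 1` disjoint branch sets.
-/

section PathClosed

variable {ι : Type*} {T : SimpleGraph ι}

def PathClosed (T : SimpleGraph ι) (A : Set ι) : Prop :=
  ∀ ⦃x y : ι⦄ (p : T.Walk x y), p.IsPath → x ∈ A → y ∈ A → ∀ z ∈ p.support, z ∈ A

lemma PathClosed.inter {A B : Set ι} (hA : PathClosed T A) (hB : PathClosed T B) :
    PathClosed T (A ∩ B) := fun _ _ p hp hx hy z hz =>
  ⟨hA p hp hx.1 hy.1 z hz, hB p hp hx.2 hy.2 z hz⟩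

lemma SimpleGraph.IsAcyclic.pathClosed_of_connected (hT : T.IsAcyclic) {A : Set ι}
    (hA : (T.induce A).Connected) : PathClosed T A := by
  classical
  intro x y p hp hx hy z hz
  obtain ⟨w⟩ := hA.preconnected ⟨x, hx⟩ ⟨y, hy⟩
  let w' : T.Walk x y := w.map (Embedding.induce A).toHom
  have hp_eq : p = w'.bypass :=
    congrArg Subtype.val ((hT.subsingleton_path x y).elim ⟨p, hp⟩ ⟨_, w'.bypass_isPath⟩)
  have hz' : z ∈ (w.map (Embedding.induce A).toHom).support :=
    w'.support_bypass_subset_support (hp_eq ▸ hz)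
  rw [Walk.support_map, List.mem_map] at hz'
  obtain ⟨⟨z, hzA⟩, -, rfl⟩ := hz'
  exact hzA

lemma SimpleGraph.Walk.IsPath.exists_path_through_common_mem {a b c : ι}
    {P : T.Walk a b} {Q : T.Walk a c} (hP : P.IsPath) (hQ : Q.IsPath) :
    ∃ m ∈ P.support, m ∈ Q.support ∧ ∃ r : T.Walk b c, r.IsPath ∧ m ∈ r.support := by
  classical
  -- Strip common vertices off the front; once `P` and `Q` share only `a`, `P⁻¹ Q` is a path.
  induction hn : P.length using Nat.strong_induction_on generalizing a with
  | _ n ih =>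
  by_cases hcommon : ∃ x ∈ P.support, x ∈ Q.support ∧ x ≠ a
  · obtain ⟨x, hxP, hxQ, hxa⟩ := hcommon
    have hlen : (P.dropUntil x hxP).length < n := by
      have hsplit := congrArg Walk.length (P.take_spec hxP)
      have htake : (P.takeUntil x hxP).length ≠ 0 := fun h0 =>
        hxa (Walk.eq_of_length_eq_zero h0).symm
      rw [Walk.length_append] at hsplit
      omega
    obtain ⟨m, hmP, hmQ, r, hr, hmr⟩ :=
      ih _ hlen (hP.dropUntil hxP) (hQ.dropUntil hxQ) rfl
    exact ⟨m, P.support_dropUntil_subset_support hxP hmP,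
      Q.support_dropUntil_subset_support hxQ hmQ, r, hr, hmr⟩
  · push Not at hcommon
    refine ⟨a, P.start_mem_support, Q.start_mem_support, P.reverse.append Q, ?_,
      Walk.support_subset_support_append_left _ _ (by simp)⟩
    rw [Walk.isPath_def, Walk.support_append, Walk.support_reverse]
    refine List.Nodup.append (List.nodup_reverse.mpr hP.support_nodup) hQ.support_nodup.tail ?_
    intro z hzP hzQ
    rw [List.mem_reverse] at hzP
    obtain rfl := hcommon z hzP (List.mem_of_mem_tail hzQ)
    have hnd := hQ.support_nodup
    rw [← Q.cons_tail_support] at hnd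
    exact (List.nodup_cons.mp hnd).1 hzQ

lemma SimpleGraph.IsTree.exists_mem_of_pathClosed₃ (hT : T.IsTree) {A B C : Set ι}
    (hA : PathClosed T A) (hB : PathClosed T B) (hC : PathClosed T C)
    (hAB : (A ∩ B).Nonempty) (hBC : (B ∩ C).Nonempty) (hAC : (A ∩ C).Nonempty) :
    (A ∩ B ∩ C).Nonempty := by
  classical
  obtain ⟨p, hpA, hpB⟩ := hAB
  obtain ⟨q, hqB, hqC⟩ := hBC
  obtain ⟨r, hrA, hrC⟩ := hAC
  obtain ⟨wp⟩ := hT.connected.preconnected r p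
  obtain ⟨wq⟩ := hT.connected.preconnected r q
  obtain ⟨m, hmp, hmq, w, hw, hmw⟩ :=
    wp.bypass_isPath.exists_path_through_common_mem wq.bypass_isPath
  exact ⟨m, ⟨hA _ wp.bypass_isPath hrA hpA m hmp, hB w hw hpB hqB m hmw⟩,
    hC _ wq.bypass_isPath hrC hqC m hmq⟩

/-- Helly property of subtrees. -/
lemma SimpleGraph.IsTree.exists_forall_mem_of_pathClosed {α : Type*} (hT : T.IsTree)
    {s : Finset α} (hs : s.Nonempty) (f : α → Set ι) (hf : ∀ a ∈ s, PathClosed T (f a))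
    (hint : ∀ a ∈ s, ∀ b ∈ s, (f a ∩ f b).Nonempty) :
    ∃ t, ∀ a ∈ s, t ∈ f a := by
  induction hs using Finset.Nonempty.cons_induction generalizing f with
  | singleton a =>
    obtain ⟨t, ht, -⟩ := hint a (Finset.mem_singleton_self a) a (Finset.mem_singleton_self a)
    exact ⟨t, fun b hb => Finset.mem_singleton.mp hb ▸ ht⟩
  | cons a s has hs ih =>
    have ha : a ∈ s.cons a has := s.mem_cons_self a
    have hs_sub : ∀ b ∈ s, b ∈ s.cons a has := fun b hb => Finset.mem_cons_of_mem hb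
    obtain ⟨t, ht⟩ := ih (fun b => f b ∩ f a)
      (fun b hb => (hf b (hs_sub b hb)).inter (hf a ha))
      fun b hb b' hb' =>
        (hT.exists_mem_of_pathClosed₃ (hf b (hs_sub b hb)) (hf b' (hs_sub b' hb')) (hf a ha)
          (hint b (hs_sub b hb) b' (hs_sub b' hb')) (hint b' (hs_sub b' hb') a ha)
          (hint b (hs_sub b hb) a ha)).mono fun _ ht => ⟨⟨ht.1.1, ht.2⟩, ht.1.2, ht.2⟩
    obtain ⟨b, hb⟩ := hs
    refine ⟨t, fun b' hb' => ?_⟩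
    rcases Finset.mem_cons.mp hb' with rfl | hb'
    · exact (ht b hb).2
    · exact (ht b' hb').1

end PathClosed

section TreeDecomposition

variable {V : Type u} {ι : Type*} {G : SimpleGraph V} {T : SimpleGraph ι} {bag : ι → Set V}

lemma connected_induce_setOf_bag_meets
    (hcover : ∀ x, ∃ i, x ∈ bag i) (hedge : ∀ ⦃x y⦄, G.Adj x y → ∃ i, x ∈ bag i ∧ y ∈ bag i)
    (hvert : ∀ x, (T.induce {i | x ∈ bag i}).Connected)
    {B : Set V} (hB : (G.induce B).Connected) :
    (T.induce {i | ∃ v ∈ B, v ∈ bag i}).Connected := by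
  set U := {i | ∃ v ∈ B, v ∈ bag i}
  have hsub : ∀ x ∈ B, {i | x ∈ bag i} ⊆ U := fun x hx i hi => ⟨x, hx, hi⟩
  have hreach_bag : ∀ x (hx : x ∈ B) t t' (ht : x ∈ bag t) (ht' : x ∈ bag t'),
      (T.induce U).Reachable ⟨t, hsub x hx ht⟩ ⟨t', hsub x hx ht'⟩ := fun x hx t t' ht ht' =>
    ((hvert x).preconnected ⟨t, ht⟩ ⟨t', ht'⟩).map (induceHomOfLE T (hsub x hx)).toHom
  have hreach_walk : ∀ {x y : B} (w : (G.induce B).Walk x y) t t' (ht : x.1 ∈ bag t)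
      (ht' : y.1 ∈ bag t'), (T.induce U).Reachable ⟨t, hsub _ x.2 ht⟩ ⟨t', hsub _ y.2 ht'⟩ := by
    intro x y w
    induction w with
    | nil => exact hreach_bag _ (Subtype.coe_prop _)
    | @cons u _ _ hadj _ ih =>
      intro t t' ht ht'
      obtain ⟨t₀, h₀, h₁⟩ := hedge hadj
      exact (hreach_bag _ u.2 t t₀ ht h₀).trans (ih t₀ t' h₁ ht')
  obtain ⟨⟨b, hb⟩⟩ := hB.nonempty
  obtain ⟨i, hi⟩ := hcover b
  have : Nonempty U := ⟨⟨i, b, hb, hi⟩⟩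
  refine ⟨fun ⟨t, x, hx, ht⟩ ⟨t', y, hy, ht'⟩ => ?_⟩
  obtain ⟨w⟩ := hB.preconnected ⟨x, hx⟩ ⟨y, hy⟩
  exact hreach_walk w t t' ht ht'

end TreeDecomposition

lemma TreewidthAtMost.card_le_of_isMinorOf_completeGraph {V : Type u} {W : Type v} [Finite W]
    {G : SimpleGraph V} {k : ℕ} (htw : TreewidthAtMost G k)
    (hminor : IsMinorOf (completeGraph W) G) : Nat.card W ≤ k + 1 := by
  classical
  obtain ⟨ι, T, bag, hT, hcover, hedge, hvert, hbag⟩ := htw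
  obtain ⟨φ, hconn, hdisj, htouch⟩ := hminor
  cases isEmpty_or_nonempty W
  · simp
  have := Fintype.ofFinite W
  let meets : W → Set ι := fun w => {i | ∃ v ∈ φ w, v ∈ bag i}
  have hmeets_inter : ∀ w w', (meets w ∩ meets w').Nonempty := by
    intro w w'
    obtain rfl | hne := eq_or_ne w w'
    · obtain ⟨⟨v, hv⟩⟩ := (hconn w).nonempty
      obtain ⟨i, hi⟩ := hcover v
      exact ⟨i, ⟨v, hv, hi⟩, ⟨v, hv, hi⟩⟩
    · obtain ⟨x, hx, y, hy, hxy⟩ := htouch hne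
      obtain ⟨i, hxi, hyi⟩ := hedge hxy
      exact ⟨i, ⟨x, hx, hxi⟩, ⟨y, hy, hyi⟩⟩
  obtain ⟨t, ht⟩ := hT.exists_forall_mem_of_pathClosed Finset.univ_nonempty meets
    (fun w _ => hT.isAcyclic.pathClosed_of_connected
      (connected_induce_setOf_bag_meets hcover hedge hvert (hconn w)))
    fun w _ w' _ => hmeets_inter w w'
  choose v hvφ hvbag using fun w => ht w (Finset.mem_univ w)
  have hv_inj : Function.Injective fun w => (⟨v w, hvbag w⟩ : bag t) := by
    intro w w' hww'
    by_contra hne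
    have hvv : v w = v w' := congrArg Subtype.val hww'
    exact Set.disjoint_left.mp (hdisj hne) (hvφ w) (hvv ▸ hvφ w')
  have := (hbag t).1.to_subtype
  calc Nat.card W ≤ Nat.card (bag t) := Nat.card_le_card_of_injective _ hv_inj
    _ = (bag t).ncard := Nat.card_coe_set_eq _
    _ ≤ k + 1 := (hbag t).2

section Minor

variable {V : Type u} {W : Type v} {G : SimpleGraph V} {H : SimpleGraph W}

lemma Touches.mono {X Y X' Y' : Set V} (h : Touches G X Y) (hX : X ⊆ X') (hY : Y ⊆ Y') :
    Touches G X' Y' :=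
  let ⟨x, hx, y, hy, hxy⟩ := h
  ⟨x, hX hx, y, hY hy, hxy⟩

lemma Touches.symm {X Y : Set V} (h : Touches G X Y) : Touches G Y X :=
  let ⟨x, hx, y, hy, hxy⟩ := h
  ⟨y, hy, x, hx, hxy.symm⟩

lemma IsInducedMinorOf.isMinorOf (h : IsInducedMinorOf H G) : IsMinorOf H G :=
  let ⟨φ, hconn, hdisj, htouch, _⟩ := h
  ⟨φ, hconn, hdisj, htouch⟩

lemma IsInducedMinorOf.of_induce {X : Set V} (h : IsInducedMinorOf H (G.induce X)) :
    IsInducedMinorOf H G := by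
  obtain ⟨φ, hconn, hdisj, htouch, hnoedge⟩ := h
  refine ⟨fun w => Subtype.val '' φ w, fun w => ?_, fun w w' hne => ?_, fun w w' hadj => ?_,
    fun w w' hne hnadj => ?_⟩
  · refine (hconn w).map (induceHom (Embedding.induce X).toHom (Set.mapsTo_image _ _)) ?_
    rintro ⟨_, x, hx, rfl⟩
    exact ⟨⟨x, hx⟩, rfl⟩
  · exact Set.disjoint_image_of_injective Subtype.val_injective (hdisj hne)
  · obtain ⟨x, hx, y, hy, hxy⟩ := htouch hadj
    exact ⟨x, Set.mem_image_of_mem _ hx, y, Set.mem_image_of_mem _ hy, hxy⟩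
  · rintro _ ⟨x, hx, rfl⟩ _ ⟨y, hy, rfl⟩
    exact hnoedge hne hnadj hx hy

/-- Contract the matching edges `aᵢbᵢ` of `K_{c,c}` for `i ≠ 0`, and keep `a₀`, `b₀` apart. -/
lemma IsMinorOf.completeGraph_option_of_completeBipartite {c : ℕ} (hc : 0 < c)
    (h : IsMinorOf (completeBipartiteGraph (Fin c) (Fin c)) G) :
    IsMinorOf (completeGraph (Option (Fin c))) G := by
  obtain ⟨φ, hconn, hdisj, htouch⟩ := h
  set i₀ : Fin c := ⟨0, hc⟩
  let ψ : Option (Fin c) → Set V := fun o =>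
    o.elim (φ (.inr i₀)) fun i => if i = i₀ then φ (.inl i) else φ (.inl i) ∪ φ (.inr i)
  have hψ₀ : ψ (some i₀) = φ (.inl i₀) := by simp [ψ]
  have hψ : ∀ i ≠ i₀, ψ (some i) = φ (.inl i) ∪ φ (.inr i) := fun i hi => by simp [ψ, hi]
  have hψ_left : ∀ i, φ (.inl i) ⊆ ψ (some i) := by
    intro i
    obtain rfl | hi := eq_or_ne i i₀
    · exact hψ₀.ge
    · exact hψ i hi ▸ Set.subset_union_left
  have hψ_right : ∀ i ≠ i₀, φ (.inr i) ⊆ ψ (some i) := fun i hi =>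
    hψ i hi ▸ Set.subset_union_right
  have hψ_sub : ∀ i, ψ (some i) ⊆ φ (.inl i) ∪ φ (.inr i) := by
    intro i
    obtain rfl | hi := eq_or_ne i i₀
    · exact hψ₀ ▸ Set.subset_union_left
    · exact (hψ i hi).le
  have hdisj_pair : ∀ i j, i ≠ j →
      Disjoint (φ (.inl i) ∪ φ (.inr i)) (φ (.inl j) ∪ φ (.inr j)) := by
    intro i j hij
    simp only [Set.disjoint_union_left, Set.disjoint_union_right]
    refine ⟨⟨hdisj ?_, hdisj ?_⟩, hdisj ?_, hdisj ?_⟩ <;> simp [hij]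
  refine ⟨ψ, ?_, ?_, ?_⟩
  · rintro (_ | i)
    · exact hconn _
    · obtain rfl | hi := eq_or_ne i i₀
      · exact hψ₀ ▸ hconn _
      · obtain ⟨x, hx, y, hy, hxy⟩ := htouch (w := .inl i) (w' := .inr i) (by simp)
        exact hψ i hi ▸ connected_induce_union (hconn _).preconnected (hconn _).preconnected
          hx hy hxy
  · have hdisj_none : ∀ j, Disjoint (ψ none) (ψ (some j)) := by
      intro j
      obtain rfl | hj := eq_or_ne j i₀
      · exact hψ₀ ▸ hdisj (by simp)
      · exact Disjoint.mono_right (hψ_sub j) <|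
          Set.disjoint_union_right.mpr ⟨hdisj (by simp), hdisj (by simp [hj.symm])⟩
    rintro (_ | i) (_ | j) hne
    · exact absurd rfl hne
    · exact hdisj_none j
    · exact (hdisj_none i).symm
    · exact (hdisj_pair i j (by simpa using hne)).mono (hψ_sub i) (hψ_sub j)
  · have htouch_none : ∀ j, Touches G (ψ none) (ψ (some j)) := fun j =>
      (htouch (w := .inr i₀) (w' := .inl j) (by simp)).mono le_rfl (hψ_left j)
    rintro (_ | i) (_ | j) hne
    · exact absurd rfl hne
    · exact htouch_none j
    · exact (htouch_none i).symm
    · have hij : i ≠ j := by simpa using hne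
      obtain hj | rfl := ne_or_eq j i₀
      · exact (htouch (w := .inl i) (w' := .inr j) (by simp)).mono
          (hψ_left i) (hψ_right j hj)
      · exact (htouch (w := .inr i) (w' := .inl i₀) (by simp)).mono
          (hψ_right i hij) (hψ_left _)

end Minor

lemma nonempty_fin_embedding_of_natCard_eq {α : Type*} {n : ℕ} (h : Nat.card α = n) :
    Nonempty (Fin n ↪ α) := by
  subst h
  cases finite_or_infinite α
  · exact ⟨(Finite.equivFin α).symm.toEmbedding⟩
  · exact ⟨Fin.valEmbedding.trans (Infinite.natEmbedding α)⟩

lemma IsInducedPath.connected {V : Type u} {G : SimpleGraph V} {P : Set V}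
    (h : IsInducedPath G P) : (G.induce P).Connected := by
  obtain ⟨n, hn, ⟨e⟩⟩ := h
  obtain ⟨m, rfl⟩ : ∃ m, n = m + 1 := ⟨n - 1, by omega⟩
  exact e.connected_iff.mpr (pathGraph_connected m)

lemma IsSLConstellation.isInducedMinorOf_completeBipartite {V : Type u} {G : SimpleGraph V}
    {S : Set V} {s l : ℕ} (h : IsSLConstellation G S s l) :
    IsInducedMinorOf (completeBipartiteGraph (Fin s) (Fin l)) G := by
  obtain ⟨hstab, -, hScard, hKcard, hpath, hadj⟩ := h
  obtain ⟨x⟩ := nonempty_fin_embedding_of_natCard_eq ((Nat.card_coe_set_eq S).trans hScard)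
  obtain ⟨C⟩ := nonempty_fin_embedding_of_natCard_eq hKcard
  have hx_not_mem : ∀ i j, (x i : V) ∉ Subtype.val '' (C j).supp := by
    rintro i j ⟨v, -, hv⟩
    exact v.2 (hv ▸ (x i).2)
  refine ⟨Sum.elim (fun i => {(x i : V)}) (fun j => Subtype.val '' (C j).supp),
    ?_, ?_, ?_, ?_⟩
  · rintro (i | j)
    · simp only [Sum.elim_inl, induce_singleton_eq_top]
      exact connected_top
    · exact (hpath (C j)).connected
  · rintro (i | i) (j | j) hne
    · simpa [Subtype.val_injective.eq_iff, x.injective.eq_iff] using hne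
    · simp [hx_not_mem i j]
    · simp [hx_not_mem j i]
    · exact Set.disjoint_image_of_injective Subtype.val_injective
        (pairwise_disjoint_supp_connectedComponent _ (C.injective.ne (by simpa using hne)))
  · rintro (i | i) (j | j) hadj'
    · simp at hadj'
    · obtain ⟨z, hz, hxz⟩ := hadj (x i) (x i).2 (C j)
      exact ⟨x i, rfl, z, hz, hxz⟩
    · obtain ⟨z, hz, hxz⟩ := hadj (x j) (x j).2 (C i)
      exact ⟨z, hz, x j, rfl, hxz.symm⟩
    · simp at hadj'
  · rintro (i | i) (j | j) hne hnadj
    · rintro _ rfl _ rfl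
      exact hstab (x i).2 (x j).2
        (by simpa [Subtype.val_injective.eq_iff, x.injective.eq_iff] using hne)
    · simp at hnadj
    · simp at hnadj
    · rintro _ ⟨a, ha, rfl⟩ _ ⟨b, hb, rfl⟩ hab
      rw [ConnectedComponent.mem_supp_iff] at ha hb
      exact C.injective.ne (by simpa using hne)
        (ha.symm.trans
          ((ConnectedComponent.connectedComponentMk_eq_of_adj (G := G.induce Sᶜ) hab).trans hb))

theorem stmt_17_general {V : Type u} (G : SimpleGraph V) (c : ℕ) (hc : 1 ≤ c)
    (X : Set V) (S : Set ↥X) (hcon : IsSLConstellation (G.induce X) S c c) :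
    IsInducedMinorOf (completeBipartiteGraph (Fin c) (Fin c)) G ∧
      ¬ TreewidthAtMost (G.induce X) (c - 1) := by
  have hminor := hcon.isInducedMinorOf_completeBipartite
  refine ⟨hminor.of_induce, fun htw => ?_⟩
  have hcard := htw.card_le_of_isMinorOf_completeGraph
    (hminor.isMinorOf.completeGraph_option_of_completeBipartite hc)
  rw [Nat.card_eq_fintype_card, Fintype.card_option, Fintype.card_fin] at hcard
  omega

theorem stmt_17 {V : Type u} [Fintype V] (G : SimpleGraph V) (c : ℕ) (hc : 1 ≤ c)
    (X : Set V) (S : Set ↥X) (hcon : IsSLConstellation (G.induce X) S c c) :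
    IsInducedMinorOf (completeBipartiteGraph (Fin c) (Fin c)) G ∧
      ¬ TreewidthAtMost (G.induce X) (c - 1) :=
  stmt_17_general G c hc X S hcon
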